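/- arXiv:1005.2149 — 3 statements merged into one kernel-verified Lean document; each statement's English description precedes it below -/
import Mathlib

section
/- Let J_n, J be bounded self-adjoint operators on ℓ²(ℤ) with J_n → J in the strong operator topology and ‖J_n‖ ≤ R for all n. If K_n, K are non-empty compact subsets of ℝ with h(K_n, K) → 0 in Hausdorff distance and σ(J_n) ⊆ K_n for all n, then σ(J) ⊆ K. -/
/-!
A point of σ(J₀) is real, say μ; suppose μ ∉ K₀ and let d = dist(μ, K₀) > 0. Once
h(Kₙ, K₀) < d/2, the spectrum of the normal operator μ - Jₙ stays at distance ≥ d/2 from 0, so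
its inverse has norm ≤ 2/d, i.e. ‖(μ - Jₙ)v‖ ≥ (d/2)‖v‖. This lower bound passes to the strong
limit, and a self-adjoint operator that is bounded below is invertible (its range is closed and
has trivial orthogonal complement), so μ ∉ σ(J₀).
-/

open Filter

/-- ℓ²(ℤ) over ℂ. -/
noncomputable abbrev SeqSpace : Type := lp (fun _ : ℤ => ℂ) 2

theorem IsStarNormal.norm_inv_le_of_le_norm_spectrum {A : Type*} [CStarAlgebra A] (u : Aˣ)
    [IsStarNormal (u : A)] {r : ℝ} (hr : 0 < r) (h : ∀ z ∈ spectrum ℂ (u : A), r ≤ ‖z‖) :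
    ‖(↑u⁻¹ : A)‖ ≤ r⁻¹ := by
  have hrad : spectralRadius ℂ (↑u⁻¹ : A) ≤ ENNReal.ofReal r⁻¹ := by
    refine iSup₂_le fun z hz => ?_
    have hz : r ≤ ‖z‖⁻¹ := norm_inv z ▸ h z⁻¹ (spectrum.inv₀_mem hz)
    rw [← ENNReal.ofReal_coe_nnreal, coe_nnnorm]
    exact ENNReal.ofReal_le_ofReal ((le_inv_comm₀ hr (inv_pos.mp (hr.trans_le hz))).mp hz)
  rw [IsStarNormal.spectralRadius_eq_nnnorm, ← ENNReal.ofReal_coe_nnreal, coe_nnnorm] at hrad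
  exact (ENNReal.ofReal_le_ofReal_iff (by positivity)).mp hrad

theorem ContinuousLinearMap.mul_norm_le_norm_apply_of_le_norm_spectrum
    {E : Type*} [NormedAddCommGroup E] [InnerProductSpace ℂ E] [CompleteSpace E]
    {T : E →L[ℂ] E} [IsStarNormal T] {r : ℝ} (hr : 0 < r) (h : ∀ z ∈ spectrum ℂ T, r ≤ ‖z‖)
    (v : E) : r * ‖v‖ ≤ ‖T v‖ := by
  have h0 : (0 : ℂ) ∉ spectrum ℂ T := fun h0 => by simpa using hr.trans_le (h 0 h0)
  obtain ⟨u, rfl⟩ := spectrum.isUnit_of_zero_notMem ℂ h0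
  have hinv : ‖(↑u⁻¹ : E →L[ℂ] E)‖ ≤ r⁻¹ := IsStarNormal.norm_inv_le_of_le_norm_spectrum u hr h
  calc r * ‖v‖ = r * ‖(↑u⁻¹ : E →L[ℂ] E) ((u : E →L[ℂ] E) v)‖ := by
        rw [← mul_apply_eq_comp, Units.inv_mul, one_apply_eq_self]
    _ ≤ r * (r⁻¹ * ‖(u : E →L[ℂ] E) v‖) := by gcongr; exact (le_opNorm _ _).trans (by gcongr)
    _ = ‖(u : E →L[ℂ] E) v‖ := by field_simp

theorem IsSelfAdjoint.isUnit_of_bounded_below {𝕜 E : Type*} [RCLike 𝕜] [NormedAddCommGroup E]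
    [InnerProductSpace 𝕜 E] [CompleteSpace E] {T : E →L[𝕜] E} (hT : IsSelfAdjoint T) {c : ℝ}
    (hc : 0 < c) (h : ∀ v, c * ‖v‖ ≤ ‖T v‖) : IsUnit T := by
  have hanti : AntilipschitzWith (Real.toNNReal c⁻¹) T :=
    T.antilipschitz_of_bound fun v => by
      rw [Real.coe_toNNReal _ (by positivity), ← div_eq_inv_mul, le_div_iff₀' hc]
      exact h v
  have hker : T.ker = ⊥ := LinearMap.ker_eq_bot.mpr hanti.injective
  have hclosed : IsClosed (T.range : Set E) := by
    simpa [LinearMap.coe_range] using hanti.isClosed_range T.uniformContinuous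
  have hrange : T.range = ⊤ := by
    rw [← hclosed.submodule_topologicalClosure_eq, ← Submodule.orthogonal_orthogonal_eq_closure,
      ContinuousLinearMap.orthogonal_range, hT.adjoint_eq, hker, Submodule.bot_orthogonal_eq_top]
  exact ContinuousLinearMap.isUnit_iff_bijective.mpr
    ⟨hanti.injective, LinearMap.range_eq_top.mp hrange⟩

theorem Metric.infDist_sub_hausdorffDist_le_dist {α : Type*} [PseudoMetricSpace α]
    {s t : Set α} {x y : α} (hy : y ∈ s) (fin : hausdorffEDist s t ≠ ⊤) :
    infDist x t - hausdorffDist s t ≤ dist x y := by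
  have := infDist_le_infDist_add_hausdorffDist (x := x) fin
  have := infDist_le_dist_of_mem (x := x) hy
  linarith

theorem spectrum_subset_of_strong_limit_general
    (J : ℕ → SeqSpace →L[ℂ] SeqSpace) (J₀ : SeqSpace →L[ℂ] SeqSpace)
    (hsa : ∀ n, IsSelfAdjoint (J n)) (hsa₀ : IsSelfAdjoint J₀)
    (hSOT : ∀ v : SeqSpace, Tendsto (fun n => J n v) atTop (nhds (J₀ v)))
    (K : ℕ → Set ℝ) (K₀ : Set ℝ)
    (hKn : ∀ n, IsCompact (K n) ∧ (K n).Nonempty)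
    (hK₀ : IsCompact K₀ ∧ K₀.Nonempty)
    (hH : Tendsto (fun n => Metric.hausdorffDist (K n) K₀) atTop (nhds 0))
    (hspec : ∀ n, spectrum ℂ (J n) ⊆ (fun x : ℝ => (x : ℂ)) '' (K n)) :
    spectrum ℂ J₀ ⊆ (fun x : ℝ => (x : ℂ)) '' K₀ := by
  intro x hx
  obtain ⟨μ, rfl⟩ : ∃ μ : ℝ, (μ : ℂ) = x := ⟨x.re, (hsa₀.mem_spectrum_eq_re hx).symm⟩
  refine ⟨μ, ?_, rfl⟩
  by_contra hμ
  set d := Metric.infDist μ K₀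
  have hd : 0 < d / 2 := half_pos ((hK₀.1.isClosed.notMem_iff_infDist_pos hK₀.2).mp hμ)
  have hμ_sa : IsSelfAdjoint (algebraMap ℂ (SeqSpace →L[ℂ] SeqSpace) μ) :=
    (show IsSelfAdjoint (μ : ℂ) from Complex.conj_ofReal μ).algebraMap _
  have hbelow : ∀ᶠ n in atTop, ∀ v, d / 2 * ‖v‖ ≤ ‖(algebraMap ℂ _ (μ : ℂ) - J n) v‖ := by
    filter_upwards [hH.eventually (gt_mem_nhds hd)] with n hn
    have : IsStarNormal (algebraMap ℂ _ (μ : ℂ) - J n) := (hμ_sa.sub (hsa n)).isStarNormal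
    refine ContinuousLinearMap.mul_norm_le_norm_apply_of_le_norm_spectrum hd fun z hz => ?_
    rw [← spectrum.singleton_sub_eq, Set.singleton_sub] at hz
    obtain ⟨_, hw, rfl⟩ := hz
    obtain ⟨t, ht, rfl⟩ := hspec n hw
    have hdist : d - Metric.hausdorffDist (K n) K₀ ≤ dist μ t :=
      Metric.infDist_sub_hausdorffDist_le_dist ht
        (Metric.hausdorffEDist_ne_top_of_nonempty_of_bounded (hKn n).2 hK₀.2
          (hKn n).1.isBounded hK₀.1.isBounded)
    rw [← dist_eq_norm, Complex.isometry_ofReal.dist_eq]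
    linarith
  have hbelow₀ : ∀ v, d / 2 * ‖v‖ ≤ ‖(algebraMap ℂ _ (μ : ℂ) - J₀) v‖ := fun v =>
    ge_of_tendsto (tendsto_const_nhds.sub (hSOT v)).norm (hbelow.mono fun n hn => hn v)
  exact spectrum.mem_iff.mp hx ((hμ_sa.sub hsa₀).isUnit_of_bounded_below hd hbelow₀)

theorem spectrum_subset_of_strong_limit
    (R : ℝ) (J : ℕ → SeqSpace →L[ℂ] SeqSpace) (J₀ : SeqSpace →L[ℂ] SeqSpace)
    (hsa : ∀ n, IsSelfAdjoint (J n)) (hsa₀ : IsSelfAdjoint J₀)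
    (hbd : ∀ n, ‖J n‖ ≤ R)
    (hSOT : ∀ v : SeqSpace, Tendsto (fun n => J n v) atTop (nhds (J₀ v)))
    (K : ℕ → Set ℝ) (K₀ : Set ℝ)
    (hKn : ∀ n, IsCompact (K n) ∧ (K n).Nonempty)
    (hK₀ : IsCompact K₀ ∧ K₀.Nonempty)
    (hH : Tendsto (fun n => Metric.hausdorffDist (K n) K₀) atTop (nhds 0))
    (hspec : ∀ n, spectrum ℂ (J n) ⊆ (fun x : ℝ => (x : ℂ)) '' (K n)) :
    spectrum ℂ J₀ ⊆ (fun x : ℝ => (x : ℂ)) '' K₀ :=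
  spectrum_subset_of_strong_limit_general J J₀ hsa hsa₀ hSOT K K₀ hKn hK₀ hH hspec
end

section
/- Let ξ : (−R, R) → [0,1] be measurable and define the Herglotz function H(z) = (z+R) exp(∫_{−R}^{R} ξ(t)/(t−z) dt) for z in the upper half plane. Then H is holomorphic on the upper half plane with positive imaginary part, and H(iy)/(iy) → 1 as y → ∞. -/
open MeasureTheory Filter Complex

/-! Write `G z = ∫_{-R}^{R} ξ t / (t - z) dt`. Since `‖1 / (t - z)‖ ≤ 1 / |Im z|`, the function `G`
is holomorphic off the real axis and tends to `0` as `Im z → ∞`; this gives the holomorphy of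
`H = (z + R) exp G` and `H (iy) / (iy) → 1`.

For positivity, `Im (1 / (t - z)) ≥ 0` when `Im z > 0`, and `∫_{-R}^{R} dt / (t - z) =
log (z - R) - log (z + R)`. As `0 ≤ ξ ≤ 1`, this gives `0 ≤ Im G z ≤ arg (z - R) - arg (z + R)`,
so the argument `arg (z + R) + Im G z` of `H z` lies in `(0, π)`. -/

open Topology Bornology

namespace Complex

theorem abs_im_le_norm_ofReal_sub (t : ℝ) (z : ℂ) : |z.im| ≤ ‖(t : ℂ) - z‖ := by
  simpa using abs_im_le_norm ((t : ℂ) - z)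

theorem im_inv_ofReal_sub_nonneg (t : ℝ) {z : ℂ} (hz : 0 ≤ z.im) :
    0 ≤ (((t : ℂ) - z)⁻¹).im := by
  rw [inv_im, sub_im, ofReal_im, zero_sub, neg_neg]
  exact div_nonneg hz (normSq_nonneg _)

theorem continuous_ofReal_sub (z : ℂ) : Continuous fun t : ℝ => (t : ℂ) - z := by fun_prop

theorem hasDerivAt_div_ofReal_sub (c : ℂ) (t : ℝ) {z : ℂ} (hz : (t : ℂ) - z ≠ 0) :
    HasDerivAt (fun z => c / ((t : ℂ) - z)) (c / ((t : ℂ) - z) ^ 2) z :=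
  ((hasDerivAt_const z c).div ((hasDerivAt_id' z).const_sub (t : ℂ)) hz).congr_deriv (by ring)

theorem half_abs_im_le_abs_im_of_mem_ball {z₀ z : ℂ} (hz : z ∈ Metric.ball z₀ (|z₀.im| / 2)) :
    |z₀.im| / 2 ≤ |z.im| := by
  have h := (abs_im_le_norm (z - z₀)).trans (mem_ball_iff_norm.1 hz).le
  rw [sub_im] at h
  linarith [abs_sub_abs_le_abs_sub z₀.im z.im, abs_sub_comm z.im z₀.im]

theorem arg_pos_of_im_pos {z : ℂ} (hz : 0 < z.im) : 0 < arg z :=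
  (arg_nonneg_iff.2 hz.le).lt_of_ne fun h => hz.ne' (arg_eq_zero_iff.1 h.symm).2

theorem im_mul_exp_pos {w G : ℂ} (hw : w ≠ 0) (h₀ : 0 < arg w + G.im)
    (hπ : arg w + G.im < Real.pi) : 0 < (w * exp G).im := by
  rw [← exp_log hw, ← exp_add, exp_im, add_im, log_im]
  exact mul_pos (Real.exp_pos _) (Real.sin_pos_of_pos_of_lt_pi h₀ hπ)

theorem comap_im_atTop_le_cobounded : comap im atTop ≤ cobounded ℂ :=
  tendsto_norm_atTop_iff_cobounded.1 <|
    tendsto_atTop_mono (fun z => im_le_norm z) tendsto_comap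

theorem tendsto_ofReal_mul_I_comap_im_atTop :
    Tendsto (fun y : ℝ => (y : ℂ) * I) atTop (comap im atTop) :=
  tendsto_comap_iff.2 <| by simp only [Function.comp_def, mul_I_im, ofReal_re]; exact tendsto_id

theorem tendsto_add_mul_exp_div_self {l : Filter ℂ} (hl : l ≤ cobounded ℂ) {G : ℂ → ℂ}
    (hG : Tendsto G l (𝓝 0)) (c : ℂ) :
    Tendsto (fun z => (z + c) * exp (G z) / z) l (𝓝 1) := by
  have hinv : Tendsto (fun z : ℂ => z⁻¹) l (𝓝 0) := tendsto_inv₀_cobounded.mono_left hl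
  have hlim : Tendsto (fun z => (1 + c * z⁻¹) * exp (G z)) l (𝓝 ((1 + c * 0) * exp 0)) :=
    (tendsto_const_nhds.add (hinv.const_mul c)).mul (continuous_exp.tendsto 0 |>.comp hG)
  rw [mul_zero, add_zero, exp_zero, mul_one] at hlim
  refine hlim.congr' ?_
  filter_upwards [hl (isBounded_singleton (x := (0 : ℂ)))] with z hz
  have hz : z ≠ 0 := hz
  field_simp

theorem im_integral {α : Type*} [MeasurableSpace α] {μ : Measure α} {f : α → ℂ}
    (hf : Integrable f μ) : (∫ x, f x ∂μ).im = ∫ x, (f x).im ∂μ :=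
  (integral_im hf).symm

section CauchyTransform

variable {μ : Measure ℝ} {f : ℝ → ℂ} {C : ℝ}

theorem norm_div_ofReal_sub_le {t : ℝ} {z : ℂ} (hf : ‖f t‖ ≤ C) (hz : z.im ≠ 0) :
    ‖f t / ((t : ℂ) - z)‖ ≤ C / |z.im| := by
  rw [norm_div]
  exact div_le_div₀ ((norm_nonneg _).trans hf) hf (abs_pos.2 hz) (abs_im_le_norm_ofReal_sub t z)

variable [IsFiniteMeasure μ]

theorem integrable_div_ofReal_sub (hf : AEStronglyMeasurable f μ) (hC : ∀ t, ‖f t‖ ≤ C)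
    {z : ℂ} (hz : z.im ≠ 0) : Integrable (fun t : ℝ => f t / ((t : ℂ) - z)) μ :=
  (integrable_const (C / |z.im|)).mono'
    (hf.div₀ (continuous_ofReal_sub z).aestronglyMeasurable)
    (ae_of_all _ fun _ => norm_div_ofReal_sub_le (hC _) hz)

theorem differentiableOn_integral_div_ofReal_sub (hf : AEStronglyMeasurable f μ)
    (hC : ∀ t, ‖f t‖ ≤ C) :
    DifferentiableOn ℂ (fun z => ∫ t, f t / ((t : ℂ) - z) ∂μ) {z | z.im ≠ 0} := by
  intro z₀ hz₀
  have hz₀ : z₀.im ≠ 0 := hz₀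
  set δ := |z₀.im| / 2
  have hδ : 0 < δ := half_pos (abs_pos.2 hz₀)
  have hsub : ∀ t : ℝ, ∀ z ∈ Metric.ball z₀ δ, (t : ℂ) - z ≠ 0 := fun t z hz h => by
    have := (half_abs_im_le_abs_im_of_mem_ball hz).trans (abs_im_le_norm_ofReal_sub t z)
    rw [h, norm_zero] at this
    exact hδ.not_ge this
  refine DifferentiableAt.differentiableWithinAt (hasDerivAt_integral_of_dominated_loc_of_deriv_le
    (F := fun z t => f t / ((t : ℂ) - z)) (bound := fun _ => C / δ ^ 2)
    (Metric.ball_mem_nhds z₀ hδ)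
    (Eventually.of_forall fun z => hf.div₀ (continuous_ofReal_sub z).aestronglyMeasurable)
    (integrable_div_ofReal_sub hf hC hz₀)
    (hf.div₀ ((continuous_ofReal_sub z₀).pow 2).aestronglyMeasurable)
    (ae_of_all _ fun t z hz => ?_) (integrable_const _)
    (ae_of_all _ fun t z hz => hasDerivAt_div_ofReal_sub (f t) t (hsub t z hz))).2.differentiableAt
  have hnorm : δ ≤ ‖(t : ℂ) - z‖ :=
    (half_abs_im_le_abs_im_of_mem_ball hz).trans (abs_im_le_norm_ofReal_sub t z)
  rw [norm_div, norm_pow]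
  exact div_le_div₀ ((norm_nonneg _).trans (hC t)) (hC t) (pow_pos hδ 2)
    (pow_le_pow_left₀ hδ.le hnorm 2)

theorem tendsto_integral_div_ofReal_sub_comap_im_atTop (hC : ∀ t, ‖f t‖ ≤ C) :
    Tendsto (fun z => ∫ t, f t / ((t : ℂ) - z) ∂μ) (comap im atTop) (𝓝 0) := by
  have hbound : Tendsto (fun z : ℂ => C / |z.im| * μ.real Set.univ) (comap im atTop) (𝓝 0) := by
    have := ((tendsto_inv_atTop_zero.comp tendsto_abs_atTop_atTop).comp
      (tendsto_comap (f := im) (x := atTop))).const_mul C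
    simpa [div_eq_mul_inv] using this.mul_const (μ.real Set.univ)
  refine squeeze_zero_norm' ?_ hbound
  filter_upwards [tendsto_comap.eventually (eventually_gt_atTop 0)] with z hz
  exact norm_integral_le_of_norm_le_const
    (ae_of_all _ fun t => norm_div_ofReal_sub_le (hC t) hz.ne')

end CauchyTransform

theorem integral_inv_ofReal_sub {z : ℂ} (hz : z.im ≠ 0) (a b : ℝ) :
    ∫ t in a..b, ((t : ℂ) - z)⁻¹ = log (z - b) - log (z - a) := by
  have hslit : ∀ t : ℝ, z - t ∈ slitPlane := fun t => by simp [mem_slitPlane_iff, hz]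
  refine intervalIntegral.integral_eq_sub_of_hasDerivAt (f := fun t : ℝ => log (z - t))
    (fun t _ => ?_) (((continuous_ofReal_sub z).inv₀ fun t h => ?_).intervalIntegrable _ _)
  · refine ((((hasDerivAt_id' t).ofReal_comp).const_sub z).clog_real (hslit t)).congr_deriv ?_
    rw [ofReal_one, neg_div, ← div_neg, neg_sub, one_div]
  · exact hz (by simpa using congrArg im h)

variable {ξ : ℝ → ℝ}

theorem im_integral_ofReal_div_ofReal_sub_nonneg {μ : Measure ℝ} (hξ : ∀ t, 0 ≤ ξ t) {z : ℂ}
    (hz : 0 ≤ z.im) : 0 ≤ (∫ t, (ξ t : ℂ) / ((t : ℂ) - z) ∂μ).im := by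
  by_cases hint : Integrable (fun t : ℝ => (ξ t : ℂ) / ((t : ℂ) - z)) μ
  · rw [im_integral hint]
    refine integral_nonneg fun t => ?_
    rw [div_eq_mul_inv, im_ofReal_mul]
    exact mul_nonneg (hξ t) (im_inv_ofReal_sub_nonneg t hz)
  · simp [integral_undef hint]

theorem im_setIntegral_Ioo_ofReal_div_ofReal_sub_le (hξm : Measurable ξ)
    (hξ : ∀ t, 0 ≤ ξ t ∧ ξ t ≤ 1) {a b : ℝ} (hab : a ≤ b) {z : ℂ} (hz : 0 < z.im) :
    (∫ t in Set.Ioo a b, (ξ t : ℂ) / ((t : ℂ) - z)).im ≤ arg (z - b) - arg (z - a) := by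
  have hint : IntegrableOn (fun t : ℝ => (ξ t : ℂ) / ((t : ℂ) - z)) (Set.Ioo a b) :=
    integrable_div_ofReal_sub (C := 1) (continuous_ofReal.measurable.comp hξm).aestronglyMeasurable
      (fun t => by simp [abs_of_nonneg (hξ t).1, (hξ t).2]) hz.ne'
  have hker : IntegrableOn (fun t : ℝ => ((t : ℂ) - z)⁻¹) (Set.Ioo a b) :=
    (((continuous_ofReal_sub z).inv₀ fun t h => hz.ne' (by simpa using congrArg im h))
      |>.integrableOn_Icc).mono_set Set.Ioo_subset_Icc_self
  calc (∫ t in Set.Ioo a b, (ξ t : ℂ) / ((t : ℂ) - z)).im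
      = ∫ t in Set.Ioo a b, ((ξ t : ℂ) / ((t : ℂ) - z)).im := im_integral hint
    _ ≤ ∫ t in Set.Ioo a b, (((t : ℂ) - z)⁻¹).im := by
        refine integral_mono hint.im hker.im fun t => ?_
        rw [div_eq_mul_inv, im_ofReal_mul]
        exact mul_le_of_le_one_left (im_inv_ofReal_sub_nonneg t hz.le) (hξ t).2
    _ = (∫ t in a..b, ((t : ℂ) - z)⁻¹).im := by
        rw [intervalIntegral.integral_of_le hab, integral_Ioc_eq_integral_Ioo, im_integral hker]
    _ = arg (z - b) - arg (z - a) := by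
        rw [integral_inv_ofReal_sub hz.ne', sub_im, log_im, log_im]

end Complex

theorem krein_representation_herglotz (R : ℝ) (hR : 0 < R)
    (ξ : ℝ → ℝ) (hmeas : Measurable ξ) (hξ : ∀ t, 0 ≤ ξ t ∧ ξ t ≤ 1)
    (H : ℂ → ℂ)
    (hH : ∀ z : ℂ, H z =
      (z + R) * Complex.exp (∫ t in Set.Ioo (-R) R, (ξ t : ℂ) / ((t : ℂ) - z))) :
    DifferentiableOn ℂ H {z : ℂ | 0 < z.im} ∧
    (∀ z : ℂ, 0 < z.im → 0 < (H z).im) ∧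
    Tendsto (fun y : ℝ => H (y * Complex.I) / (y * Complex.I)) atTop (nhds 1) := by
  obtain rfl : H = fun z => (z + R) * exp (∫ t in Set.Ioo (-R) R, (ξ t : ℂ) / ((t : ℂ) - z)) :=
    funext hH
  have hξm : AEStronglyMeasurable (fun t => (ξ t : ℂ)) (volume.restrict (Set.Ioo (-R) R)) :=
    (continuous_ofReal.measurable.comp hmeas).aestronglyMeasurable
  have hξC : ∀ t, ‖(ξ t : ℂ)‖ ≤ 1 := fun t => by simp [abs_of_nonneg (hξ t).1, (hξ t).2]
  refine ⟨?_, fun z hz => ?_, ?_⟩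
  · exact ((differentiableOn_id.add_const _).mul
      (differentiableOn_integral_div_ofReal_sub hξm hξC).cexp).mono fun z hz => ne_of_gt hz
  · have hG₀ := im_integral_ofReal_div_ofReal_sub_nonneg (μ := volume.restrict (Set.Ioo (-R) R))
      (fun t => (hξ t).1) hz.le
    have hG₁ := im_setIntegral_Ioo_ofReal_div_ofReal_sub_le hmeas hξ (neg_le_self hR.le) hz
    rw [ofReal_neg, sub_neg_eq_add] at hG₁
    have hw : 0 < (z + R).im := by simpa using hz
    have hπ : arg (z - R) < Real.pi := arg_lt_pi_iff.2 (Or.inr (by simpa using hz.ne'))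
    exact im_mul_exp_pos (fun h => hw.ne' (by rw [h, zero_im]))
      (by linarith [arg_pos_of_im_pos hw]) (by linarith)
  · exact (tendsto_add_mul_exp_div_self comap_im_atTop_le_cobounded
      (tendsto_integral_div_ofReal_sub_comap_im_atTop hξC) R).comp
      tendsto_ofReal_mul_I_comap_im_atTop
end

section
/- Fix R > 0. The map ξ ↦ ρ from Krein functions to Herglotz measures is uniformly weak-*-continuous, and in particular: for any ε > 0 there exists δ > 0 such that whenever ξ₁, ξ₂ : (−R,R) → [0,1] satisfy ‖ξ₁−ξ₂‖_{L¹(−R,R)} < δ, the associated measures satisfy |ρ₁(ℝ) − ρ₂(ℝ)| < ε. -/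
/-!
Expanding `H(iy)` as `y → ∞`, with `s(y) = ∫ ξ(t) dt / (t - iy)` and the moments
`m = ∫ ξ`, `M = ∫ t ξ(t) dt`, one finds `iy s → -m`, `iy (iy s + m) → -M`, hence
`H(iy) = iy + (R - m) + (-M + m²/2 - Rm)/(iy) + o(1/y)`. Comparing with
`∫ dρ(t)/(t - iy) = -ρ(ℝ)/(iy) + o(1/y)` gives the explicit formula
`ρ(ℝ) = Rm + M - m²/2`. Since `0 ≤ m ≤ 2R` and both moments are Lipschitz in `ξ` for the
`L¹` norm, `ρ(ℝ)` is `4R`-Lipschitz in `ξ`.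
-/

open MeasureTheory Filter Complex

/-- `ξ` is a Krein function on `(-R,R)` whose associated Herglotz function
`H(z) = (z+R)·exp(∫ ξ(t)dt/(t−z))` has Herglotz representation
`H(z) = z + A + ∫ dρ(t)/(t−z)`. -/
def IsKreinHerglotzPair (R : ℝ) (ξ : ℝ → ℝ) (A : ℝ) (ρ : MeasureTheory.Measure ℝ) : Prop :=
  Measurable ξ ∧ (∀ t, 0 ≤ ξ t ∧ ξ t ≤ 1) ∧
  IsFiniteMeasure ρ ∧ ρ (Set.Ioo (-R) R)ᶜ = 0 ∧
  ∀ z : ℂ, 0 < z.im →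
    (z + (R : ℂ)) * Complex.exp (∫ t in Set.Ioo (-R) R, (ξ t : ℂ) / ((t : ℂ) - z)) =
      z + (A : ℂ) + ∫ t, ((t : ℂ) - z)⁻¹ ∂ρ

open Set Topology

lemma ofReal_sub_I_mul_ne_zero (t : ℝ) {y : ℝ} (hy : 0 < y) : (t : ℂ) - I * y ≠ 0 := by
  intro h
  simpa [hy.ne'] using congrArg Complex.im h

lemma norm_inv_ofReal_sub_I_mul_le (t : ℝ) {y : ℝ} (hy : 0 < y) :
    ‖((t : ℂ) - I * y)⁻¹‖ ≤ y⁻¹ := by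
  rw [norm_inv]
  refine inv_anti₀ hy ?_
  simpa [abs_of_pos hy] using Complex.abs_im_le_norm ((t : ℂ) - I * y)

lemma tendsto_zero_of_tendsto_I_mul {f : ℝ → ℂ} {L : ℂ}
    (h : Tendsto (fun y : ℝ ↦ I * y * f y) atTop (𝓝 L)) : Tendsto f atTop (𝓝 0) := by
  have hinv : Tendsto (fun y : ℝ ↦ (I * y)⁻¹) atTop (𝓝 0) := by
    refine squeeze_zero_norm (fun y ↦ le_of_eq ?_)
      (tendsto_inv_atTop_zero.comp tendsto_abs_atTop_atTop)
    simp
  have hmul := h.mul hinv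
  rw [mul_zero] at hmul
  refine hmul.congr' ?_
  filter_upwards [eventually_gt_atTop 0] with y hy
  field_simp [hy.ne']

noncomputable def cauchyMoment (μ : Measure ℝ) (k : ℕ) (y : ℝ) : ℂ :=
  ∫ t, (t : ℂ) ^ k / (t - I * y) ∂μ

section CauchyMoment

variable {μ : Measure ℝ} [IsFiniteMeasure μ] {R : ℝ}

lemma norm_ofReal_pow_le {t : ℝ} (ht : |t| ≤ R) (k : ℕ) : ‖(t : ℂ) ^ k‖ ≤ R ^ k := by
  simpa using pow_le_pow_left₀ (abs_nonneg t) ht k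

lemma norm_ofReal_pow_div_le {t : ℝ} (ht : |t| ≤ R) (k : ℕ) {y : ℝ} (hy : 0 < y) :
    ‖(t : ℂ) ^ k / (t - I * y)‖ ≤ R ^ k * y⁻¹ := by
  rw [div_eq_mul_inv, norm_mul]
  exact mul_le_mul (norm_ofReal_pow_le ht k) (norm_inv_ofReal_sub_I_mul_le t hy)
    (norm_nonneg _) (pow_nonneg ((abs_nonneg t).trans ht) k)

lemma integrable_ofReal_pow (hμ : ∀ᵐ t ∂μ, |t| ≤ R) (k : ℕ) :
    Integrable (fun t : ℝ ↦ (t : ℂ) ^ k) μ :=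
  .of_bound (by fun_prop) (R ^ k) (hμ.mono fun _ ht ↦ norm_ofReal_pow_le ht k)

lemma integrable_ofReal_pow_div (hμ : ∀ᵐ t ∂μ, |t| ≤ R) (k : ℕ) {y : ℝ} (hy : 0 < y) :
    Integrable (fun t : ℝ ↦ (t : ℂ) ^ k / (t - I * y)) μ :=
  .of_bound (by fun_prop : Measurable _).aestronglyMeasurable (R ^ k * y⁻¹)
    (hμ.mono fun _ ht ↦ norm_ofReal_pow_div_le ht k hy)

lemma norm_cauchyMoment_le (hμ : ∀ᵐ t ∂μ, |t| ≤ R) (k : ℕ) {y : ℝ} (hy : 0 < y) :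
    ‖cauchyMoment μ k y‖ ≤ R ^ k * y⁻¹ * μ.real univ :=
  norm_integral_le_of_norm_le_const (hμ.mono fun _ ht ↦ norm_ofReal_pow_div_le ht k hy)

lemma tendsto_cauchyMoment (hμ : ∀ᵐ t ∂μ, |t| ≤ R) (k : ℕ) :
    Tendsto (cauchyMoment μ k) atTop (𝓝 0) := by
  refine squeeze_zero_norm' ?_ (by simpa using
    (tendsto_inv_atTop_zero.const_mul (R ^ k)).mul_const (μ.real univ))
  filter_upwards [eventually_gt_atTop 0] with y hy using norm_cauchyMoment_le hμ k hy

lemma I_mul_cauchyMoment_add_integral (hμ : ∀ᵐ t ∂μ, |t| ≤ R) (k : ℕ) {y : ℝ} (hy : 0 < y) :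
    I * y * cauchyMoment μ k y + ∫ t, (t : ℂ) ^ k ∂μ = cauchyMoment μ (k + 1) y := by
  rw [cauchyMoment, cauchyMoment, ← integral_const_mul,
    ← integral_add ((integrable_ofReal_pow_div hμ k hy).const_mul _) (integrable_ofReal_pow hμ k)]
  refine integral_congr_ae (ae_of_all _ fun t ↦ ?_)
  field_simp [ofReal_sub_I_mul_ne_zero t hy]
  ring

lemma tendsto_I_mul_cauchyMoment (hμ : ∀ᵐ t ∂μ, |t| ≤ R) (k : ℕ) :
    Tendsto (fun y : ℝ ↦ I * y * cauchyMoment μ k y) atTop (𝓝 (-∫ t, (t : ℂ) ^ k ∂μ)) := by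
  have h := (tendsto_cauchyMoment hμ (k + 1)).sub_const (∫ t, (t : ℂ) ^ k ∂μ)
  rw [zero_sub] at h
  refine h.congr' ?_
  filter_upwards [eventually_gt_atTop 0] with y hy
  rw [← I_mul_cauchyMoment_add_integral hμ k hy, add_sub_cancel_right]

end CauchyMoment

section ExpExpansion

variable {α : Type*} {l : Filter α} {w s : α → ℂ}

lemma norm_exp_sub_one_sub_id_sub_sq_le {x : ℂ} (hx : ‖x‖ ≤ 1) :
    ‖exp x - 1 - x - x ^ 2 / 2‖ ≤ ‖x‖ ^ 3 := by
  have h := Complex.exp_bound hx (n := 3) (by norm_num)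
  simp only [Finset.sum_range_succ, Finset.range_zero, Finset.sum_empty] at h
  norm_num [Nat.factorial] at h
  calc ‖exp x - 1 - x - x ^ 2 / 2‖ = ‖exp x - (1 + x + x ^ 2 / 2)‖ := by ring_nf
    _ ≤ ‖x‖ ^ 3 * (2 / 9) := h
    _ ≤ ‖x‖ ^ 3 := by nlinarith [pow_nonneg (norm_nonneg x) 3]

lemma tendsto_pow_mul_remainder {r : ℂ → ℂ} {L : ℂ} (n : ℕ)
    (hr : ∀ x : ℂ, ‖x‖ ≤ 1 → ‖r x‖ ≤ ‖x‖ ^ (n + 1))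
    (hs : Tendsto s l (𝓝 0)) (hws : Tendsto (fun a ↦ w a * s a) l (𝓝 L)) :
    Tendsto (fun a ↦ w a ^ n * r (s a)) l (𝓝 0) := by
  have hbound : Tendsto (fun a ↦ ‖w a * s a‖ ^ n * ‖s a‖) l (𝓝 (‖L‖ ^ n * 0)) :=
    (hws.norm.pow n).mul (by simpa using hs.norm)
  rw [mul_zero] at hbound
  refine squeeze_zero_norm' ?_ hbound
  have hsmall : ∀ᶠ a in l, ‖s a‖ ≤ 1 := by
    simpa using hs.norm.eventually (ge_mem_nhds (by simp : ‖(0 : ℂ)‖ < 1))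
  filter_upwards [hsmall] with a ha
  calc ‖w a ^ n * r (s a)‖ ≤ ‖w a‖ ^ n * ‖s a‖ ^ (n + 1) := by
        rw [norm_mul, norm_pow]; gcongr; exact hr _ ha
    _ = ‖w a * s a‖ ^ n * ‖s a‖ := by rw [norm_mul, mul_pow, pow_succ]; ring

lemma tendsto_mul_exp_expansion {m M R : ℂ} (hs : Tendsto s l (𝓝 0))
    (h₁ : Tendsto (fun a ↦ w a * s a) l (𝓝 (-m)))
    (h₂ : Tendsto (fun a ↦ w a * (w a * s a + m)) l (𝓝 (-M))) :
    Tendsto (fun a ↦ w a * ((w a + R) * exp (s a) - w a - (R - m))) l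
      (𝓝 (-M + m ^ 2 / 2 - R * m)) := by
  have h₃ := tendsto_pow_mul_remainder 2 (fun _ ↦ norm_exp_sub_one_sub_id_sub_sq_le) hs h₁
  have h₄ := tendsto_pow_mul_remainder 1 (fun _ ↦ by simpa using norm_exp_sub_one_sub_id_le) hs h₁
  have hsum :=
    (((h₂.add ((h₁.pow 2).div_const 2)).add h₃).add (h₁.const_mul R)).add (h₄.const_mul R)
  convert hsum using 2 <;> ring

end ExpExpansion

noncomputable def kreinMeasure (R : ℝ) (ξ : ℝ → ℝ) : Measure ℝ :=
  (volume.restrict (Ioo (-R) R)).withDensity fun t ↦ ENNReal.ofReal (ξ t)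

noncomputable def kreinMass (R : ℝ) (ξ : ℝ → ℝ) : ℝ :=
  R * (∫ t in Ioo (-R) R, ξ t) + (∫ t in Ioo (-R) R, t * ξ t) - (∫ t in Ioo (-R) R, ξ t) ^ 2 / 2

section KreinFunction

variable {R : ℝ} {ξ : ℝ → ℝ}

lemma abs_le_of_mem_Ioo {t : ℝ} (ht : t ∈ Ioo (-R) R) : |t| ≤ R :=
  abs_le.2 ⟨ht.1.le, ht.2.le⟩

lemma integrableOn_Ioo_of_abs_le_one (hξ : Measurable ξ) (hξ1 : ∀ t, |ξ t| ≤ 1) :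
    IntegrableOn ξ (Ioo (-R) R) :=
  Measure.integrableOn_of_bounded measure_Ioo_lt_top.ne hξ.aestronglyMeasurable
    (ae_of_all _ hξ1)

lemma ae_kreinMeasure_abs_le : ∀ᵐ t ∂kreinMeasure R ξ, |t| ≤ R :=
  (withDensity_absolutelyContinuous _ _).ae_le
    (ae_restrict_of_forall_mem measurableSet_Ioo fun _ ↦ abs_le_of_mem_Ioo)

lemma isFiniteMeasure_kreinMeasure (hξ : Measurable ξ) (hξ1 : ∀ t, |ξ t| ≤ 1) :
    IsFiniteMeasure (kreinMeasure R ξ) :=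
  isFiniteMeasure_withDensity_ofReal (integrableOn_Ioo_of_abs_le_one hξ hξ1).hasFiniteIntegral

lemma integral_kreinMeasure (hξ : Measurable ξ) (hξ0 : ∀ t, 0 ≤ ξ t) (g : ℝ → ℂ) :
    ∫ t, g t ∂kreinMeasure R ξ = ∫ t in Ioo (-R) R, (ξ t : ℂ) * g t := by
  rw [kreinMeasure, integral_withDensity_eq_integral_toReal_smul hξ.ennreal_ofReal
    (ae_of_all _ fun _ ↦ ENNReal.ofReal_lt_top)]
  simp only [ENNReal.toReal_ofReal (hξ0 _), Complex.real_smul]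

lemma integral_ofReal_pow_kreinMeasure (hξ : Measurable ξ) (hξ0 : ∀ t, 0 ≤ ξ t) (k : ℕ) :
    ∫ t, (t : ℂ) ^ k ∂kreinMeasure R ξ = ((∫ t in Ioo (-R) R, t ^ k * ξ t : ℝ) : ℂ) := by
  rw [integral_kreinMeasure hξ hξ0, ← integral_complex_ofReal]
  push_cast
  simp only [mul_comm]

end KreinFunction

theorem measureReal_univ_eq_of_exp_cauchyMoment {μ ρ : Measure ℝ} [IsFiniteMeasure μ]
    [IsFiniteMeasure ρ] {R : ℝ} {A : ℂ} (hμ : ∀ᵐ t ∂μ, |t| ≤ R) (hρ : ∀ᵐ t ∂ρ, |t| ≤ R)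
    (hH : ∀ y : ℝ, 0 < y →
      (I * y + R) * exp (cauchyMoment μ 0 y) = I * y + A + cauchyMoment ρ 0 y) :
    (ρ.real univ : ℂ) = R * μ.real univ + ∫ t, (t : ℂ) ∂μ - (μ.real univ : ℂ) ^ 2 / 2 := by
  set m : ℂ := ∫ t, (t : ℂ) ^ 0 ∂μ
  set M : ℂ := ∫ t, (t : ℂ) ^ 1 ∂μ
  set g : ℝ → ℂ := fun y ↦ (I * y + R) * exp (cauchyMoment μ 0 y) - I * y - (R - m)
  have hexp : Tendsto (fun y : ℝ ↦ I * y * g y) atTop (𝓝 (-M + m ^ 2 / 2 - R * m)) := by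
    refine tendsto_mul_exp_expansion (tendsto_cauchyMoment hμ 0)
      (tendsto_I_mul_cauchyMoment hμ 0) ((tendsto_I_mul_cauchyMoment hμ 1).congr' ?_)
    filter_upwards [eventually_gt_atTop 0] with y hy
    rw [I_mul_cauchyMoment_add_integral hμ 0 hy]
  have hA : A = R - m := by
    have hdiff := (tendsto_zero_of_tendsto_I_mul hexp).sub (tendsto_cauchyMoment hρ 0)
    rw [sub_zero] at hdiff
    refine eq_of_sub_eq_zero (tendsto_nhds_unique (hdiff.congr' ?_) tendsto_const_nhds).symm
    filter_upwards [eventually_gt_atTop 0] with y hy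
    simp only [g, hH y hy]
    ring
  have hρlim : Tendsto (fun y : ℝ ↦ I * y * g y) atTop (𝓝 (-∫ t, (t : ℂ) ^ 0 ∂ρ)) := by
    refine (tendsto_I_mul_cauchyMoment hρ 0).congr' ?_
    filter_upwards [eventually_gt_atTop 0] with y hy
    simp only [g, hH y hy, hA]
    ring
  have hmass := tendsto_nhds_unique hρlim hexp
  simp only [m, M, pow_zero, pow_one, integral_const, Complex.real_smul, mul_one] at hmass
  linear_combination -hmass

theorem IsKreinHerglotzPair.toReal_measure_univ_eq {R : ℝ} {ξ : ℝ → ℝ} {A : ℝ} {ρ : Measure ℝ}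
    (h : IsKreinHerglotzPair R ξ A ρ) : (ρ univ).toReal = kreinMass R ξ := by
  obtain ⟨hξ, hξ01, hρ, hρsupp, hH⟩ := h
  have hξ0 : ∀ t, 0 ≤ ξ t := fun t ↦ (hξ01 t).1
  have := isFiniteMeasure_kreinMeasure (R := R) hξ fun t ↦
    (abs_of_nonneg (hξ0 t)).trans_le (hξ01 t).2
  have hρIoo : ∀ᵐ t ∂ρ, t ∈ Ioo (-R) R := mem_ae_iff.2 hρsupp
  have hmass := measureReal_univ_eq_of_exp_cauchyMoment (A := A) ae_kreinMeasure_abs_le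
    (hρIoo.mono fun _ ↦ abs_le_of_mem_Ioo) fun y hy ↦ by
      convert hH (I * y) (by simpa using hy) using 3
      · rw [cauchyMoment, integral_kreinMeasure hξ hξ0]
        simp only [pow_zero, mul_one_div]
      · simp [cauchyMoment]
  have hm := integral_ofReal_pow_kreinMeasure (R := R) hξ hξ0 0
  have hM := integral_ofReal_pow_kreinMeasure (R := R) hξ hξ0 1
  simp only [pow_zero, pow_one, one_mul, integral_const, Complex.real_smul, mul_one] at hm hM
  rw [hm, hM] at hmass
  rw [kreinMass, ← measureReal_def]
  exact_mod_cast hmass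

section KreinMassLipschitz

variable {R : ℝ} {ξ ξ₁ ξ₂ : ℝ → ℝ}

lemma integrableOn_mul_Ioo_of_abs_le_one (hξ : Measurable ξ) (hξ1 : ∀ t, |ξ t| ≤ 1) :
    IntegrableOn (fun t ↦ t * ξ t) (Ioo (-R) R) := by
  refine Measure.integrableOn_of_bounded (M := R) measure_Ioo_lt_top.ne
    (measurable_id.mul hξ).aestronglyMeasurable
    (ae_restrict_of_forall_mem measurableSet_Ioo fun t ht ↦ ?_)
  rw [Real.norm_eq_abs, abs_mul]
  simpa using mul_le_mul (abs_le_of_mem_Ioo ht) (hξ1 t) (abs_nonneg _)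
    ((abs_nonneg t).trans (abs_le_of_mem_Ioo ht))

lemma setIntegral_Ioo_le_two_mul (hR : 0 ≤ R) (hξ1 : ∀ t, |ξ t| ≤ 1) :
    ∫ t in Ioo (-R) R, ξ t ≤ 2 * R := by
  have h := norm_setIntegral_le_of_norm_le_const (C := 1)
    (measure_Ioo_lt_top (a := -R) (b := R) (μ := volume))
    fun t _ ↦ (Real.norm_eq_abs (ξ t)).trans_le (hξ1 t)
  rw [Real.volume_real_Ioo, max_eq_left (by linarith), Real.norm_eq_abs] at h
  linarith [le_abs_self (∫ t in Ioo (-R) R, ξ t)]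

lemma abs_kreinMass_sub_le (hR : 0 ≤ R)
    (hξ₁ : Measurable ξ₁) (hξ₁01 : ∀ t, 0 ≤ ξ₁ t ∧ ξ₁ t ≤ 1)
    (hξ₂ : Measurable ξ₂) (hξ₂01 : ∀ t, 0 ≤ ξ₂ t ∧ ξ₂ t ≤ 1) :
    |kreinMass R ξ₁ - kreinMass R ξ₂| ≤ 4 * R * ∫ t in Ioo (-R) R, |ξ₁ t - ξ₂ t| := by
  have hξ₁1 : ∀ t, |ξ₁ t| ≤ 1 := fun t ↦ (abs_of_nonneg (hξ₁01 t).1).trans_le (hξ₁01 t).2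
  have hξ₂1 : ∀ t, |ξ₂ t| ≤ 1 := fun t ↦ (abs_of_nonneg (hξ₂01 t).1).trans_le (hξ₂01 t).2
  have hi₁ := integrableOn_Ioo_of_abs_le_one (R := R) hξ₁ hξ₁1
  have hi₂ := integrableOn_Ioo_of_abs_le_one (R := R) hξ₂ hξ₂1
  set D := ∫ t in Ioo (-R) R, |ξ₁ t - ξ₂ t|
  set m₁ := ∫ t in Ioo (-R) R, ξ₁ t
  set m₂ := ∫ t in Ioo (-R) R, ξ₂ t
  set M₁ := ∫ t in Ioo (-R) R, t * ξ₁ t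
  set M₂ := ∫ t in Ioo (-R) R, t * ξ₂ t
  have hm : |m₁ - m₂| ≤ D := by
    rw [← integral_sub hi₁ hi₂]
    exact abs_integral_le_integral_abs
  have hM : |M₁ - M₂| ≤ R * D := by
    rw [← integral_sub (integrableOn_mul_Ioo_of_abs_le_one hξ₁ hξ₁1)
      (integrableOn_mul_Ioo_of_abs_le_one hξ₂ hξ₂1), ← integral_const_mul]
    refine abs_integral_le_integral_abs.trans (integral_mono_of_nonneg
      (ae_of_all _ fun _ ↦ abs_nonneg _) ((hi₁.sub hi₂).abs.const_mul R)
      (ae_restrict_of_forall_mem measurableSet_Ioo fun t ht ↦ ?_))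
    show |t * ξ₁ t - t * ξ₂ t| ≤ R * |ξ₁ t - ξ₂ t|
    rw [← mul_sub, abs_mul]
    exact mul_le_mul_of_nonneg_right (abs_le_of_mem_Ioo ht) (abs_nonneg _)
  have hm₁ : 0 ≤ m₁ := setIntegral_nonneg measurableSet_Ioo fun t _ ↦ (hξ₁01 t).1
  have hm₂ : 0 ≤ m₂ := setIntegral_nonneg measurableSet_Ioo fun t _ ↦ (hξ₂01 t).1
  have hsum : m₁ + m₂ ≤ 4 * R := by
    linarith [setIntegral_Ioo_le_two_mul hR hξ₁1, setIntegral_Ioo_le_two_mul hR hξ₂1]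
  calc |kreinMass R ξ₁ - kreinMass R ξ₂|
      = |R * (m₁ - m₂) + (M₁ - M₂) - (m₁ + m₂) / 2 * (m₁ - m₂)| := by
        simp only [kreinMass, m₁, m₂, M₁, M₂]
        congr 1
        ring
    _ ≤ R * |m₁ - m₂| + |M₁ - M₂| + (m₁ + m₂) / 2 * |m₁ - m₂| := by
        refine (abs_sub _ _).trans (add_le_add ((abs_add_le _ _).trans ?_) ?_) <;>
          rw [abs_mul, abs_of_nonneg (by positivity)]
    _ ≤ R * D + R * D + (4 * R) / 2 * D := by gcongr
    _ = 4 * R * D := by ring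

end KreinMassLipschitz

theorem totalMass_uniformly_continuous_in_L1 (R : ℝ) (hR : 0 < R) :
    ∀ ε > (0 : ℝ), ∃ δ > (0 : ℝ),
      ∀ (ξ₁ ξ₂ : ℝ → ℝ) (A₁ A₂ : ℝ) (ρ₁ ρ₂ : Measure ℝ),
        IsKreinHerglotzPair R ξ₁ A₁ ρ₁ → IsKreinHerglotzPair R ξ₂ A₂ ρ₂ →
        (∫ t in Set.Ioo (-R) R, |ξ₁ t - ξ₂ t|) < δ →
        |(ρ₁ Set.univ).toReal - (ρ₂ Set.univ).toReal| < ε := by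
  intro ε hε
  refine ⟨ε / (4 * R), by positivity, fun ξ₁ ξ₂ A₁ A₂ ρ₁ ρ₂ h₁ h₂ hδ ↦ ?_⟩
  rw [h₁.toReal_measure_univ_eq, h₂.toReal_measure_univ_eq]
  calc |kreinMass R ξ₁ - kreinMass R ξ₂|
      ≤ 4 * R * ∫ t in Ioo (-R) R, |ξ₁ t - ξ₂ t| :=
        abs_kreinMass_sub_le hR.le h₁.1 h₁.2.1 h₂.1 h₂.2.1
    _ < 4 * R * (ε / (4 * R)) := by gcongr
    _ = ε := by field_simp
end
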